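/- Let H ∈ (1/2, 1) and let a, b > 0. Then lim_{R→∞} R^{−2H}·H·(2H−1)·∫_{ℝ²} φ_{a,R}(y)·φ_{b,R}(z)·|y−z|^{2H−2} dy dz = 2^{2H}·a·b. -/

import Mathlib

/-!
Substituting `y = R u`, `z = R v` turns `R^{-2H}` times the double integral into
`∬ φ_{a,R}(R u) φ_{b,R}(R v) |u - v|^{2H-2} du dv`. As `R → ∞`, `φ_{a,R}(R u) → a·1_{[-1,1]}(u)`
for `|u| ≠ 1`, with `|φ_{a,R}(R u)| ≤ a` and support in `[-(1+a), 1+a]`; since `|x|^{2H-2}` is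
locally integrable, dominated convergence applies to the inner and then to the outer integral.
The limit `a b ∫_{-1}^1 ∫_{-1}^1 |u - v|^{2H-2} = a b 2^{2H} / (H (2H-1))` is computed explicitly.
-/

open MeasureTheory Real intervalIntegral Filter Topology

/-- `φ_{a,R}(y) = (1/2) ∫_{-R}^R 1_{|x-y|≤a} dx`. -/
noncomputable def phi (a R y : ℝ) : ℝ :=
  (1/2) * ∫ x in (-R)..R, if |x - y| ≤ a then (1:ℝ) else 0

open Set

section KernelConvergence

variable {ι : Type*} {l : Filter ι} [l.IsCountablyGenerated] {f g : ι → ℝ → ℝ} {F G K : ℝ → ℝ}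
  {C D M N : ℝ}

theorem integrableOn_Icc_comp_sub (hKi : ∀ c d, IntervalIntegrable K volume c d) (u c d : ℝ) :
    IntegrableOn (fun v => K (u - v)) (Icc c d) := by
  have := (hKi (u - c) (u - d)).comp_sub_left u
  rw [sub_sub_cancel, sub_sub_cancel, intervalIntegrable_iff'] at this
  exact this.mono_set Icc_subset_uIcc

theorem integral_Icc_abs_comp_sub_le (hKi : ∀ c d, IntervalIntegrable K volume c d) {u : ℝ}
    (hu : |u| ≤ M) :
    ∫ v in Icc (-N) N, |K (u - v)| ≤ ∫ w in Icc (-(M + N)) (M + N), |K w| := by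
  rcases lt_or_ge N 0 with hN | hN
  · rw [Icc_eq_empty (by linarith), Measure.restrict_empty, integral_zero_measure]
    exact setIntegral_nonneg measurableSet_Icc fun _ _ => abs_nonneg _
  obtain ⟨hu₁, hu₂⟩ := abs_le.mp hu
  rw [integral_Icc_eq_integral_Ioc, integral_Icc_eq_integral_Ioc,
    ← integral_of_le (by linarith), ← integral_of_le (by linarith),
    integral_comp_sub_left (fun w => |K w|)]
  exact integral_mono_interval (by linarith) (by linarith) (by linarith)
    (.of_forall fun _ => abs_nonneg _) (hKi _ _).abs

theorem abs_mul_le_indicator {φ k : ℝ → ℝ} (hb : ∀ v, |φ v| ≤ D) (hs : ∀ v, N < |v| → φ v = 0)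
    (v : ℝ) : |φ v * k v| ≤ (Icc (-N) N).indicator (fun v => D * |k v|) v := by
  rw [abs_mul]
  by_cases hv : v ∈ Icc (-N) N
  · rw [indicator_of_mem hv]
    exact mul_le_mul_of_nonneg_right (hb v) (abs_nonneg _)
  · rw [indicator_of_notMem hv, hs v (by rwa [mem_Icc, ← abs_le, not_le] at hv), abs_zero,
      zero_mul]

theorem abs_integral_mul_comp_sub_le (hKi : ∀ c d, IntervalIntegrable K volume c d)
    {φ : ℝ → ℝ} (hb : ∀ v, |φ v| ≤ D) (hs : ∀ v, N < |v| → φ v = 0) {u : ℝ} (hu : |u| ≤ M) :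
    |∫ v, φ v * K (u - v)| ≤ D * ∫ w in Icc (-(M + N)) (M + N), |K w| := by
  have hD : 0 ≤ D := (abs_nonneg _).trans (hb 0)
  calc |∫ v, φ v * K (u - v)|
      ≤ ∫ v, (Icc (-N) N).indicator (fun v => D * |K (u - v)|) v :=
        norm_integral_le_of_norm_le (f := fun v => φ v * K (u - v))
          ((integrable_indicator_iff measurableSet_Icc).mpr
            ((integrableOn_Icc_comp_sub hKi u _ _).abs.const_mul D))
          (.of_forall (abs_mul_le_indicator hb hs))
    _ = D * ∫ v in Icc (-N) N, |K (u - v)| := by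
        rw [MeasureTheory.integral_indicator measurableSet_Icc,
          MeasureTheory.integral_const_mul]
    _ ≤ D * ∫ w in Icc (-(M + N)) (M + N), |K w| :=
        mul_le_mul_of_nonneg_left (integral_Icc_abs_comp_sub_le hKi hu) hD

variable (hK : Measurable K) (hKi : ∀ c d, IntervalIntegrable K volume c d)
  (hgm : ∀ᶠ i in l, Measurable (g i)) (hgb : ∀ᶠ i in l, ∀ v, |g i v| ≤ D)
  (hgs : ∀ᶠ i in l, ∀ v, N < |v| → g i v = 0)
include hK hKi hgm hgb hgs

theorem tendsto_integral_mul_comp_sub (hgl : ∀ᵐ v, Tendsto (fun i => g i v) l (𝓝 (G v)))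
    (u : ℝ) :
    Tendsto (fun i => ∫ v, g i v * K (u - v)) l (𝓝 (∫ v, G v * K (u - v))) := by
  refine tendsto_integral_filter_of_dominated_convergence
    ((Icc (-N) N).indicator fun v => D * |K (u - v)|) ?_ ?_ ?_ ?_
  · filter_upwards [hgm] with i hi
    exact (hi.mul (hK.comp (measurable_const.sub measurable_id))).aestronglyMeasurable
  · filter_upwards [hgb, hgs] with i hb hs
    exact .of_forall (abs_mul_le_indicator hb hs)
  · rw [integrable_indicator_iff measurableSet_Icc]
    exact (integrableOn_Icc_comp_sub hKi u _ _).abs.const_mul D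
  · filter_upwards [hgl] with v hv
    exact hv.mul_const _

theorem tendsto_integral_integral_mul_comp_sub
    (hfm : ∀ᶠ i in l, Measurable (f i)) (hfb : ∀ᶠ i in l, ∀ u, |f i u| ≤ C)
    (hfs : ∀ᶠ i in l, ∀ u, M < |u| → f i u = 0)
    (hfl : ∀ᵐ u, Tendsto (fun i => f i u) l (𝓝 (F u)))
    (hgl : ∀ᵐ v, Tendsto (fun i => g i v) l (𝓝 (G v))) :
    Tendsto (fun i => ∫ u, ∫ v, f i u * g i v * K (u - v)) l
      (𝓝 (∫ u, ∫ v, F u * G v * K (u - v))) := by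
  simp_rw [mul_assoc, MeasureTheory.integral_const_mul]
  set B := ∫ w in Icc (-(M + N)) (M + N), |K w|
  refine tendsto_integral_filter_of_dominated_convergence
    ((Icc (-M) M).indicator fun _ => C * (D * B)) ?_ ?_ ?_ ?_
  · filter_upwards [hfm, hgm] with i hf hg
    have hgK : Measurable fun p : ℝ × ℝ => g i p.2 * K (p.1 - p.2) :=
      (hg.comp measurable_snd).mul (hK.comp (measurable_fst.sub measurable_snd))
    exact (hf.stronglyMeasurable.mul
      hgK.stronglyMeasurable.integral_prod_right').aestronglyMeasurable
  · filter_upwards [hfb, hfs, hgb, hgs] with i hfb hfs hgb hgs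
    refine .of_forall fun u => ?_
    rw [norm_mul, Real.norm_eq_abs, Real.norm_eq_abs]
    by_cases hu : u ∈ Icc (-M) M
    · rw [indicator_of_mem hu]
      exact mul_le_mul (hfb u) (abs_integral_mul_comp_sub_le hKi hgb hgs (abs_le.mpr hu))
        (abs_nonneg _) ((abs_nonneg _).trans (hfb u))
    · rw [indicator_of_notMem hu, hfs u (by rwa [mem_Icc, ← abs_le, not_le] at hu), abs_zero,
        zero_mul]
  · exact (integrable_indicator_iff measurableSet_Icc).mpr
      (integrableOn_const measure_Icc_lt_top.ne)
  · filter_upwards [hfl] with u hu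
    exact hu.mul (tendsto_integral_mul_comp_sub hK hKi hgm hgb hgs hgl u)

end KernelConvergence

section AbsRpow

variable {r : ℝ}

theorem intervalIntegrable_abs_rpow (hr : -1 < r) (c d : ℝ) :
    IntervalIntegrable (fun x : ℝ => |x| ^ r) volume c d := by
  have : LocallyIntegrable (fun x : ℝ => |x| ^ r) volume :=
    locallyIntegrable_of_norm_le_rpow (C := 1) (α := -r) (by simp) (by simp; linarith)
      (.of_forall fun x => by simp [abs_rpow_of_nonneg (abs_nonneg x)])
      (continuous_abs.measurable.pow_const r).aestronglyMeasurable
  exact (intervalIntegrable_iff').mpr (this.integrableOn_isCompact isCompact_uIcc)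

theorem integral_abs_rpow_of_nonneg (hr : -1 < r) {t : ℝ} (ht : 0 ≤ t) :
    ∫ w in (0:ℝ)..t, |w| ^ r = t ^ (r + 1) / (r + 1) := by
  rw [integral_congr fun w hw => by rw [abs_of_nonneg (uIcc_of_le ht ▸ hw).1],
    integral_rpow (.inl hr), zero_rpow (by linarith), sub_zero]

theorem integral_abs_rpow_neg_of_nonneg (hr : -1 < r) {s t : ℝ} (hs : 0 ≤ s) (ht : 0 ≤ t) :
    ∫ w in (-s)..t, |w| ^ r = (s ^ (r + 1) + t ^ (r + 1)) / (r + 1) := by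
  have hneg : ∫ w in (-s)..0, |w| ^ r = ∫ w in (0:ℝ)..s, |w| ^ r := by
    simpa using (integral_comp_neg (a := 0) (b := s) fun w : ℝ => |w| ^ r).symm
  rw [← integral_add_adjacent_intervals (b := 0) (intervalIntegrable_abs_rpow hr _ _)
    (intervalIntegrable_abs_rpow hr _ _), hneg, integral_abs_rpow_of_nonneg hr hs,
    integral_abs_rpow_of_nonneg hr ht, add_div]

theorem integral_abs_sub_rpow (hr : -1 < r) {u c d : ℝ} (hu : u ∈ Icc c d) :
    ∫ v in c..d, |u - v| ^ r = ((u - c) ^ (r + 1) + (d - u) ^ (r + 1)) / (r + 1) := by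
  rw [integral_comp_sub_left (fun w => |w| ^ r), ← neg_sub d u,
    integral_abs_rpow_neg_of_nonneg hr (sub_nonneg.mpr hu.2) (sub_nonneg.mpr hu.1), add_comm]

end AbsRpow

theorem integral_indicator_const_mul {α : Type*} [MeasurableSpace α] {μ : Measure α} {s : Set α}
    (hs : MeasurableSet s) (c : ℝ) (f : α → ℝ) :
    ∫ x, s.indicator (fun _ => c) x * f x ∂μ = c * ∫ x in s, f x ∂μ := by
  simp_rw [← indicator_mul_left]
  rw [MeasureTheory.integral_indicator hs, MeasureTheory.integral_const_mul]

theorem integral_integral_indicator_mul_abs_sub_rpow {r : ℝ} (hr : -1 < r) (a b : ℝ) :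
    ∫ u, ∫ v, (Icc (-1) 1).indicator (fun _ => a) u * (Icc (-1) 1).indicator (fun _ => b) v *
      |u - v| ^ r = a * b * (2 * 2 ^ (r + 2) / ((r + 1) * (r + 2))) := by
  simp_rw [mul_assoc, MeasureTheory.integral_const_mul,
    integral_indicator_const_mul measurableSet_Icc, MeasureTheory.integral_const_mul,
    integral_Icc_eq_integral_Ioc,
    ← integral_of_le (show (-1 : ℝ) ≤ 1 by norm_num)]
  have hinner : EqOn (fun u => ∫ v in (-1)..1, |u - v| ^ r)
      (fun u => ((1 + u) ^ (r + 1) + (1 - u) ^ (r + 1)) / (r + 1)) (uIcc (-1) 1) := by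
    intro u hu
    rw [uIcc_of_le (by norm_num)] at hu
    simp only [integral_abs_sub_rpow hr hu, sub_neg_eq_add, add_comm u]
  have hs : 0 < r + 1 := by linarith
  have hplus : ∫ u in (-1:ℝ)..1, (1 + u) ^ (r + 1) = 2 ^ (r + 2) / (r + 2) := by
    rw [integral_comp_add_left (fun w => w ^ (r + 1)), integral_rpow (.inl (by linarith))]
    norm_num [show r + 1 + 1 = r + 2 by ring, zero_rpow (by linarith : r + 2 ≠ 0)]
  have hminus : ∫ u in (-1:ℝ)..1, (1 - u) ^ (r + 1) = 2 ^ (r + 2) / (r + 2) := by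
    rw [integral_comp_sub_left (fun w => w ^ (r + 1)), integral_rpow (.inl (by linarith))]
    norm_num [show r + 1 + 1 = r + 2 by ring, zero_rpow (by linarith : r + 2 ≠ 0)]
  have hcont₁ : Continuous fun u : ℝ => (1 + u) ^ (r + 1) := by fun_prop (disch := linarith)
  have hcont₂ : Continuous fun u : ℝ => (1 - u) ^ (r + 1) := by fun_prop (disch := linarith)
  rw [integral_congr hinner, intervalIntegral.integral_div,
    integral_add (hcont₁.intervalIntegrable _ _) (hcont₂.intervalIntegrable _ _), hplus, hminus]
  field_simp
  ring

theorem integral_eq_mul_integral_comp_mul {R : ℝ} (hR : 0 < R) (G : ℝ → ℝ) :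
    ∫ y, G y = R * ∫ u, G (R * u) := by
  rw [Measure.integral_comp_mul_left, abs_inv, abs_of_pos hR, smul_eq_mul,
    mul_inv_cancel_left₀ hR.ne']

theorem integral_integral_mul_abs_sub_rpow_comp_mul {R : ℝ} (hR : 0 < R) (r : ℝ) (f g : ℝ → ℝ) :
    ∫ y, ∫ z, f y * g z * |y - z| ^ r =
      R ^ (r + 2) * ∫ u, ∫ v, f (R * u) * g (R * v) * |u - v| ^ r := by
  have hscale : ∀ u v, |R * u - R * v| ^ r = R ^ r * |u - v| ^ r := fun u v => by
    rw [← mul_sub, abs_mul, abs_of_pos hR, mul_rpow hR.le (abs_nonneg _)]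
  rw [integral_eq_mul_integral_comp_mul hR]
  simp_rw [integral_eq_mul_integral_comp_mul hR (fun z => _ * g z * _), hscale,
    show ∀ x y z : ℝ, x * y * (R ^ r * z) = R ^ r * (x * y * z) from fun _ _ _ => by ring,
    MeasureTheory.integral_const_mul, rpow_add hR, rpow_two]
  ring

theorem phi_eq_half_max (a y : ℝ) {R : ℝ} (hR : 0 ≤ R) :
    phi a R y = (1/2) * max (min (y + a) R - max (y - a) (-R)) 0 := by
  have hind : (fun x => if |x - y| ≤ a then (1:ℝ) else 0) =
      (Icc (y - a) (y + a)).indicator 1 := by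
    ext x
    simp only [indicator_apply, mem_Icc, abs_sub_le_iff, Pi.one_apply]
    congr 1
    exact propext (by constructor <;> rintro ⟨h1, h2⟩ <;> constructor <;> linarith)
  rw [phi, hind, integral_of_le (by linarith), ← integral_Icc_eq_integral_Ioc,
    integral_indicator_one measurableSet_Icc, measureReal_restrict_apply measurableSet_Icc,
    Icc_inter_Icc, Real.volume_real_Icc]

theorem continuous_phi (a : ℝ) {R : ℝ} (hR : 0 ≤ R) : Continuous (phi a R) := by
  simp_rw [funext (phi_eq_half_max a · hR)]
  fun_prop

theorem abs_phi_le {a R : ℝ} (ha : 0 ≤ a) (hR : 0 ≤ R) (y : ℝ) : |phi a R y| ≤ a := by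
  rw [phi_eq_half_max a y hR, abs_of_nonneg (by positivity)]
  have := min_le_left (y + a) R
  have := le_max_left (y - a) (-R)
  have : max (min (y + a) R - max (y - a) (-R)) 0 ≤ 2 * a := max_le (by linarith) (by linarith)
  linarith

theorem phi_eq_of_Icc_subset {a R y : ℝ} (ha : 0 ≤ a) (h₁ : -R ≤ y - a) (h₂ : y + a ≤ R) :
    phi a R y = a := by
  rw [phi_eq_half_max a y (by linarith), min_eq_left h₂, max_eq_left h₁,
    max_eq_left (by linarith)]
  ring

theorem phi_eq_zero_of_lt_abs {a R y : ℝ} (hR : 0 ≤ R) (h : R + a < |y|) : phi a R y = 0 := by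
  rw [phi_eq_half_max a y hR, max_eq_right, mul_zero]
  rcases lt_abs.mp h with h | h
  · linarith [min_le_right (y + a) R, le_max_left (y - a) (-R)]
  · linarith [min_le_left (y + a) R, le_max_right (y - a) (-R)]

theorem phi_mul_eq_zero {a R u : ℝ} (ha : 0 ≤ a) (hR : 1 ≤ R) (hu : 1 + a < |u|) :
    phi a R (R * u) = 0 := by
  refine phi_eq_zero_of_lt_abs (by linarith) ?_
  rw [abs_mul, abs_of_nonneg (by linarith)]
  nlinarith

theorem tendsto_phi_mul {a u : ℝ} (ha : 0 ≤ a) (hu : |u| ≠ 1) :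
    Tendsto (fun R => phi a R (R * u)) atTop (𝓝 ((Icc (-1) 1).indicator (fun _ => a) u)) := by
  rcases hu.lt_or_gt with hu | hu
  · rw [indicator_of_mem (show u ∈ Icc (-1) 1 from abs_le.mp hu.le)]
    obtain ⟨hu₁, hu₂⟩ := abs_lt.mp hu
    refine tendsto_const_nhds.congr' ?_
    filter_upwards [eventually_ge_atTop (a / (1 + u)), eventually_ge_atTop (a / (1 - u))]
      with R h₁ h₂
    rw [div_le_iff₀ (by linarith)] at h₁ h₂
    exact (phi_eq_of_Icc_subset ha (by linarith) (by linarith)).symm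
  · rw [indicator_of_notMem (by rwa [mem_Icc, ← abs_le, not_le])]
    refine tendsto_const_nhds.congr' ?_
    filter_upwards [eventually_gt_atTop (a / (|u| - 1)), eventually_ge_atTop 0] with R h₁ h₂
    rw [div_lt_iff₀ (by linarith)] at h₁
    refine (phi_eq_zero_of_lt_abs h₂ ?_).symm
    rw [abs_mul, abs_of_nonneg h₂]
    linarith

theorem ae_tendsto_phi_mul {a : ℝ} (ha : 0 ≤ a) :
    ∀ᵐ u, Tendsto (fun R => phi a R (R * u)) atTop
      (𝓝 ((Icc (-1) 1).indicator (fun _ => a) u)) := by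
  have : ({-1, 1} : Set ℝ)ᶜ ∈ ae volume := compl_mem_ae_iff.mpr ((toFinite _).measure_zero _)
  filter_upwards [this] with u hu
  refine tendsto_phi_mul ha fun h => hu ?_
  rcases abs_eq zero_le_one |>.mp h with h | h <;> simp [h]

/-- For `H ∈ (1/2,1)` and `a, b > 0`:
`lim_{R→∞} R^{-2H} H(2H-1) ∬ φ_{a,R}(y) φ_{b,R}(z) |y-z|^{2H-2} dy dz = 2^{2H} a b`. -/
theorem stmt_8 (H : ℝ) (hH : H ∈ Set.Ioo (1/2 : ℝ) 1) (a b : ℝ) (ha : 0 < a) (hb : 0 < b) :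
    Tendsto (fun R : ℝ =>
        R ^ (-(2 * H)) * (H * (2 * H - 1)) *
          ∫ y : ℝ, ∫ z : ℝ, phi a R y * phi b R z * |y - z| ^ (2 * H - 2))
      atTop (𝓝 ((2 : ℝ) ^ (2 * H) * a * b)) := by
  obtain ⟨hH₁, hH₂⟩ := hH
  have hr : -1 < 2 * H - 2 := by linarith
  have hphi {c : ℝ} (hc : 0 < c) :
      (∀ᶠ R in atTop, Measurable fun u => phi c R (R * u)) ∧
      (∀ᶠ R in atTop, ∀ u, |phi c R (R * u)| ≤ c) ∧
      (∀ᶠ R in atTop, ∀ u, 1 + c < |u| → phi c R (R * u) = 0) := by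
    refine ⟨?_, ?_, ?_⟩ <;> filter_upwards [eventually_ge_atTop 1] with R hR
    · exact (continuous_phi c (by linarith)).measurable.comp (measurable_const_mul R)
    · exact fun u => abs_phi_le hc.le (by linarith) _
    · exact fun u => phi_mul_eq_zero hc.le hR
  have hlim := tendsto_integral_integral_mul_comp_sub (continuous_abs.measurable.pow_const _)
    (intervalIntegrable_abs_rpow hr) (hphi hb).1 (hphi hb).2.1 (hphi hb).2.2 (hphi ha).1
    (hphi ha).2.1 (hphi ha).2.2 (ae_tendsto_phi_mul ha.le) (ae_tendsto_phi_mul hb.le)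
  have hval : H * (2 * H - 1) *
      (a * b * (2 * 2 ^ (2 * H - 2 + 2) / ((2 * H - 2 + 1) * (2 * H - 2 + 2)))) =
      2 ^ (2 * H) * a * b := by
    rw [show 2 * H - 2 + 2 = 2 * H by ring, show 2 * H - 2 + 1 = 2 * H - 1 by ring]
    have : (2 * H - 1) * (2 * H) ≠ 0 := by nlinarith
    calc _ = (2 * H - 1) * (2 * H) / ((2 * H - 1) * (2 * H)) * (2 ^ (2 * H) * a * b) := by
          ring
      _ = _ := by rw [div_self this, one_mul]
  rw [integral_integral_indicator_mul_abs_sub_rpow hr] at hlim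
  rw [← hval]
  refine (hlim.const_mul _).congr' ?_
  filter_upwards [eventually_gt_atTop 0] with R hR
  rw [integral_integral_mul_abs_sub_rpow_comp_mul hR _ (phi a R) (phi b R),
    show 2 * H - 2 + 2 = 2 * H by ring, rpow_neg hR.le]
  field_simp
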